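/- arXiv:2205.02427 — 5 statements merged into one kernel-verified Lean document; each statement's English description precedes it below -/
import Mathlib

section
/- Suppose the lifetime queue dynamics, boundary conditions, and availability constraint hold, and additionally Q_i^{(l)}(0) = 0 for all i ∈ V and l ∈ {1,…,L}. Then for every node i ∈ V \ {d}, every lifetime l ∈ {1,…,L}, and every horizon T ≥ 1, the telescoped availability bound holds: Q_i^{(≥l+1)}(T) ≤ Σ_{t=0}^{T−1} [ x_{→i}^{(≥l+1)}(t) + a_i^{(≥l)}(t) ] − Σ_{t=0}^{T−1} [ x_{i→}^{(l)}(t+1) + x_{i→}^{(≥l+1)}(t) ]. -/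
open Finset

/-!
Sum the dynamics over the lifetimes `ℓ ≥ l`: lifetime `ℓ + 1` at time `t` feeds lifetime `ℓ`
at time `t + 1`, so the tail `Q^{(≥ l)}(t + 1)` is the tail `Q^{(≥ l + 1)}(t)` plus net inflow
and arrivals. Availability gives `x_{i→}^{(l)}(t + 1) ≤ Q^{(l)}(t + 1)`, so removing the
lifetime-`l` queue turns this into a one-step bound on `Q^{(≥ l + 1)}`, which telescopes from
the empty initial state.
-/

namespace LifetimeQueue

theorem sum_Icc_shift_of_eq_zero {M : Type*} [AddCommMonoid M] {f : ℕ → M} {l L : ℕ}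
    (hlL : l ≤ L) (hf : f (L + 1) = 0) :
    ∑ ℓ ∈ Icc l L, f (ℓ + 1) = ∑ ℓ ∈ Icc (l + 1) L, f ℓ := by
  calc ∑ ℓ ∈ Icc l L, f (ℓ + 1) = ∑ ℓ ∈ (Icc l L).map (addRightEmbedding 1), f ℓ :=
        (sum_map (Icc l L) (addRightEmbedding 1) f).symm
    _ = ∑ ℓ ∈ Icc (l + 1) L, f ℓ := by
        rw [map_add_right_Icc, sum_Icc_succ_top (by omega), hf, add_zero]

theorem le_sum_range_of_succ_le {α : Type*} [AddCommGroup α] [PartialOrder α]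
    [IsOrderedAddMonoid α] {S g : ℕ → α} (h0 : S 0 = 0) (hstep : ∀ t, S (t + 1) ≤ S t + g t)
    (T : ℕ) : S T ≤ ∑ t ∈ range T, g t := by
  induction T with
  | zero => simp [h0]
  | succ T ih =>
    rw [sum_range_succ]
    exact (hstep T).trans (by gcongr)

section SingleNode

variable {Q out inn a : ℕ → ℕ → ℝ} {l L : ℕ}

theorem sum_Icc_backlog_succ_eq (hlL : l ≤ L)
    (hdyn : ∀ ℓ ∈ Icc l L, ∀ t,
      Q ℓ (t + 1) = Q (ℓ + 1) t - out (ℓ + 1) t + inn (ℓ + 1) t + a ℓ t)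
    (hQ : ∀ t, Q (L + 1) t = 0) (hout : ∀ t, out (L + 1) t = 0) (hinn : ∀ t, inn (L + 1) t = 0)
    (t : ℕ) :
    ∑ ℓ ∈ Icc l L, Q ℓ (t + 1)
      = ∑ ℓ ∈ Icc (l + 1) L, (Q ℓ t - out ℓ t + inn ℓ t) + ∑ ℓ ∈ Icc l L, a ℓ t := by
  rw [sum_congr rfl fun ℓ hℓ => hdyn ℓ hℓ t, sum_add_distrib,
    sum_Icc_shift_of_eq_zero (f := fun ℓ => Q ℓ t - out ℓ t + inn ℓ t) hlL
      (by simp [hQ, hout, hinn])]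

theorem sum_Icc_backlog_succ_le (hlL : l ≤ L)
    (hdyn : ∀ ℓ ∈ Icc l L, ∀ t,
      Q ℓ (t + 1) = Q (ℓ + 1) t - out (ℓ + 1) t + inn (ℓ + 1) t + a ℓ t)
    (hQ : ∀ t, Q (L + 1) t = 0) (hout : ∀ t, out (L + 1) t = 0) (hinn : ∀ t, inn (L + 1) t = 0)
    (havail : ∀ t, out l t ≤ Q l t) (t : ℕ) :
    ∑ ℓ ∈ Icc (l + 1) L, Q ℓ (t + 1)
      ≤ ∑ ℓ ∈ Icc (l + 1) L, Q ℓ t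
        + ((∑ ℓ ∈ Icc (l + 1) L, inn ℓ t + ∑ ℓ ∈ Icc l L, a ℓ t)
          - (out l (t + 1) + ∑ ℓ ∈ Icc (l + 1) L, out ℓ t)) := by
  have hbalance := sum_Icc_backlog_succ_eq hlL hdyn hQ hout hinn t
  have hsplit :
      ∑ ℓ ∈ Icc l L, Q ℓ (t + 1) = Q l (t + 1) + ∑ ℓ ∈ Icc (l + 1) L, Q ℓ (t + 1) := by
    rw [← insert_Icc_add_one_left_eq_Icc hlL, sum_insert (by simp)]
  rw [sum_add_distrib, sum_sub_distrib] at hbalance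
  linarith [havail (t + 1)]

theorem sum_Icc_backlog_le_sum_range (hlL : l ≤ L)
    (hdyn : ∀ ℓ ∈ Icc l L, ∀ t,
      Q ℓ (t + 1) = Q (ℓ + 1) t - out (ℓ + 1) t + inn (ℓ + 1) t + a ℓ t)
    (hQ : ∀ t, Q (L + 1) t = 0) (hout : ∀ t, out (L + 1) t = 0) (hinn : ∀ t, inn (L + 1) t = 0)
    (havail : ∀ t, out l t ≤ Q l t) (hQzero : ∀ ℓ ∈ Icc (l + 1) L, Q ℓ 0 = 0) (T : ℕ) :
    ∑ ℓ ∈ Icc (l + 1) L, Q ℓ T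
      ≤ ∑ t ∈ range T, (∑ ℓ ∈ Icc (l + 1) L, inn ℓ t + ∑ ℓ ∈ Icc l L, a ℓ t)
        - ∑ t ∈ range T, (out l (t + 1) + ∑ ℓ ∈ Icc (l + 1) L, out ℓ t) := by
  rw [← sum_sub_distrib]
  exact le_sum_range_of_succ_le (S := fun t => ∑ ℓ ∈ Icc (l + 1) L, Q ℓ t) (sum_eq_zero hQzero)
    (sum_Icc_backlog_succ_le hlL hdyn hQ hout hinn havail) T

end SingleNode

end LifetimeQueue

theorem telescoped_availability_bound_general
    {V : Type*} [Fintype V] [DecidableEq V]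
    (E : Finset (V × V)) (d : V) (L : ℕ)
    (Q : V → ℕ → ℕ → ℝ) (x : V → V → ℕ → ℕ → ℝ) (a : V → ℕ → ℕ → ℝ)
    (hQconv : ∀ i l t, l ∉ Finset.Icc 1 L → Q i l t = 0)
    (hxconv : ∀ i j l t, l ∉ Finset.Icc 1 L → x i j l t = 0)
    (hdyn : ∀ i, i ≠ d → ∀ l ∈ Finset.Icc 1 L, ∀ t : ℕ,
      Q i l (t + 1)
        = Q i (l + 1) t
          - (∑ j ∈ univ.filter (fun j => (i, j) ∈ E), x i j (l + 1) t)
          + (∑ j ∈ univ.filter (fun j => (j, i) ∈ E), x j i (l + 1) t)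
          + a i l t)
    (havail : ∀ i, ∀ l ∈ Finset.Icc 1 L, ∀ t : ℕ,
      (∑ j ∈ univ.filter (fun j => (i, j) ∈ E), x i j l t) ≤ Q i l t)
    (hQzero : ∀ i, ∀ l ∈ Finset.Icc 1 L, Q i l 0 = 0) :
    ∀ i, i ≠ d → ∀ l ∈ Finset.Icc 1 L, ∀ T : ℕ, 1 ≤ T →
      (∑ ℓ ∈ Finset.Icc (l + 1) L, Q i ℓ T)
        ≤ (∑ t ∈ Finset.range T,
            ((∑ ℓ ∈ Finset.Icc (l + 1) L,
                ∑ j ∈ univ.filter (fun j => (j, i) ∈ E), x j i ℓ t)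
              + (∑ ℓ ∈ Finset.Icc l L, a i ℓ t)))
          - (∑ t ∈ Finset.range T,
              ((∑ j ∈ univ.filter (fun j => (i, j) ∈ E), x i j l (t + 1))
                + (∑ ℓ ∈ Finset.Icc (l + 1) L,
                    ∑ j ∈ univ.filter (fun j => (i, j) ∈ E), x i j ℓ t))) := by
  intro i hi l hl T _
  obtain ⟨hl1, hlL⟩ := mem_Icc.mp hl
  have hsub : Icc l L ⊆ Icc 1 L := Icc_subset_Icc_left hl1
  have hbeyond : L + 1 ∉ Icc 1 L := by simp
  exact LifetimeQueue.sum_Icc_backlog_le_sum_range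
    (out := fun ℓ t => ∑ j ∈ univ.filter (fun j => (i, j) ∈ E), x i j ℓ t)
    (inn := fun ℓ t => ∑ j ∈ univ.filter (fun j => (j, i) ∈ E), x j i ℓ t) hlL
    (fun ℓ hℓ => hdyn i hi ℓ (hsub hℓ)) (fun t => hQconv i _ t hbeyond)
    (fun t => sum_eq_zero fun j _ => hxconv i j _ t hbeyond)
    (fun t => sum_eq_zero fun j _ => hxconv j i _ t hbeyond) (havail i l hl)
    (fun ℓ hℓ => hQzero i ℓ (hsub (Icc_subset_Icc_left l.le_succ hℓ))) T

/-- **Telescoped availability bound.**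
Under the lifetime queue dynamics, boundary conditions, availability constraint, and zero
initial queues, for every node `i ≠ d`, lifetime `l ∈ {1,…,L}` and horizon `T ≥ 1`:
`Q_i^{(≥l+1)}(T) ≤ Σ_{t<T} [x_{→i}^{(≥l+1)}(t) + a_i^{(≥l)}(t)]
                − Σ_{t<T} [x_{i→}^{(l)}(t+1) + x_{i→}^{(≥l+1)}(t)]`. -/
theorem telescoped_availability_bound
    {V : Type*} [Fintype V] [DecidableEq V]
    (E : Finset (V × V)) (d : V) (L : ℕ) (hL : 1 ≤ L)
    (Q : V → ℕ → ℕ → ℝ) (x : V → V → ℕ → ℕ → ℝ) (a : V → ℕ → ℕ → ℝ)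
    (hQnn : ∀ i l t, 0 ≤ Q i l t)
    (hxnn : ∀ i j l t, 0 ≤ x i j l t)
    (hann : ∀ i l t, 0 ≤ a i l t)
    (hQconv : ∀ i l t, l ∉ Finset.Icc 1 L → Q i l t = 0)
    (hxconv : ∀ i j l t, l ∉ Finset.Icc 1 L → x i j l t = 0)
    (hdyn : ∀ i, i ≠ d → ∀ l ∈ Finset.Icc 1 L, ∀ t : ℕ,
      Q i l (t + 1)
        = Q i (l + 1) t
          - (∑ j ∈ univ.filter (fun j => (i, j) ∈ E), x i j (l + 1) t)
          + (∑ j ∈ univ.filter (fun j => (j, i) ∈ E), x j i (l + 1) t)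
          + a i l t)
    (hbnd : ∀ l t, Q d l t = 0)
    (havail : ∀ i, ∀ l ∈ Finset.Icc 1 L, ∀ t : ℕ,
      (∑ j ∈ univ.filter (fun j => (i, j) ∈ E), x i j l t) ≤ Q i l t)
    (hQzero : ∀ i, ∀ l ∈ Finset.Icc 1 L, Q i l 0 = 0) :
    ∀ i, i ≠ d → ∀ l ∈ Finset.Icc 1 L, ∀ T : ℕ, 1 ≤ T →
      (∑ ℓ ∈ Finset.Icc (l + 1) L, Q i ℓ T)
        ≤ (∑ t ∈ Finset.range T,
            ((∑ ℓ ∈ Finset.Icc (l + 1) L,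
                ∑ j ∈ univ.filter (fun j => (j, i) ∈ E), x j i ℓ t)
              + (∑ ℓ ∈ Finset.Icc l L, a i ℓ t)))
          - (∑ t ∈ Finset.range T,
              ((∑ j ∈ univ.filter (fun j => (i, j) ∈ E), x i j l (t + 1))
                + (∑ ℓ ∈ Finset.Icc (l + 1) L,
                    ∑ j ∈ univ.filter (fun j => (i, j) ∈ E), x i j ℓ t))) :=
  telescoped_availability_bound_general E d L Q x a hQconv hxconv hdyn havail hQzero
end

section
/- (Proposition 1: availability implies causality.) Suppose the lifetime queue dynamics, boundary conditions, and availability constraint hold, Q_i^{(l)}(0) = 0 for all i, l, and all the Cesàro limits x̄_{ij}^{(l)} = lim_{T→∞} (1/T) Σ_{t=0}^{T−1} x_{ij}^{(l)}(t) and λ_i^{(l)} = lim_{T→∞} (1/T) Σ_{t=0}^{T−1} a_i^{(l)}(t) exist. Then for every node i ∈ V \ {d} and every lifetime l ∈ {1,…,L}, the causality constraint holds: x̄_{i→}^{(≥l)} ≤ x̄_{→i}^{(≥l+1)} + λ_i^{(≥l)}, where x̄_{i→}^{(≥l)} = Σ_{ℓ=l}^{L} Σ_{j∈δ_i^+} x̄_{ij}^{(ℓ)},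 x̄_{→i}^{(≥l+1)} = Σ_{ℓ=l+1}^{L} Σ_{j∈δ_i^-} x̄_{ji}^{(ℓ)}, and λ_i^{(≥l)} = Σ_{ℓ=l}^{L} λ_i^{(ℓ)}. -/
open Finset Filter

/-- **Proposition 1: availability implies causality.**
If the lifetime queue dynamics, boundary conditions, availability constraint, and zero
initial queues hold, and all Cesàro limits of the flows and arrivals exist, then for every
node `i ≠ d` and lifetime `l ∈ {1,…,L}` the causality constraint
`x̄_{i→}^{(≥l)} ≤ x̄_{→i}^{(≥l+1)} + λ_i^{(≥l)}` holds. -/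
theorem availability_implies_causality
    {V : Type*} [Fintype V] [DecidableEq V]
    (E : Finset (V × V)) (d : V) (L : ℕ) (hL : 1 ≤ L)
    (Q : V → ℕ → ℕ → ℝ) (x : V → V → ℕ → ℕ → ℝ) (a : V → ℕ → ℕ → ℝ)
    (xbar : V → V → ℕ → ℝ) (lam : V → ℕ → ℝ)
    (hQnn : ∀ i l t, 0 ≤ Q i l t)
    (hxnn : ∀ i j l t, 0 ≤ x i j l t)
    (hann : ∀ i l t, 0 ≤ a i l t)
    (hQconv : ∀ i l t, l ∉ Finset.Icc 1 L → Q i l t = 0)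
    (hxconv : ∀ i j l t, l ∉ Finset.Icc 1 L → x i j l t = 0)
    (hdyn : ∀ i, i ≠ d → ∀ l ∈ Finset.Icc 1 L, ∀ t : ℕ,
      Q i l (t + 1)
        = Q i (l + 1) t
          - (∑ j ∈ univ.filter (fun j => (i, j) ∈ E), x i j (l + 1) t)
          + (∑ j ∈ univ.filter (fun j => (j, i) ∈ E), x j i (l + 1) t)
          + a i l t)
    (hbnd : ∀ l t, Q d l t = 0)
    (havail : ∀ i, ∀ l ∈ Finset.Icc 1 L, ∀ t : ℕ,
      (∑ j ∈ univ.filter (fun j => (i, j) ∈ E), x i j l t) ≤ Q i l t)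
    (hQzero : ∀ i, ∀ l ∈ Finset.Icc 1 L, Q i l 0 = 0)
    (hxbar : ∀ i j l, Tendsto
      (fun T : ℕ => (∑ t ∈ Finset.range T, x i j l t) / (T : ℝ))
      atTop (nhds (xbar i j l)))
    (hlam : ∀ i l, Tendsto
      (fun T : ℕ => (∑ t ∈ Finset.range T, a i l t) / (T : ℝ))
      atTop (nhds (lam i l))) :
    ∀ i, i ≠ d → ∀ l ∈ Finset.Icc 1 L,
      (∑ ℓ ∈ Finset.Icc l L, ∑ j ∈ univ.filter (fun j => (i, j) ∈ E), xbar i j ℓ)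
        ≤ (∑ ℓ ∈ Finset.Icc (l + 1) L,
            ∑ j ∈ univ.filter (fun j => (j, i) ∈ E), xbar j i ℓ)
          + (∑ ℓ ∈ Finset.Icc l L, lam i ℓ) := by
  intro i hi l hlmem
  rw [Finset.mem_Icc] at hlmem
  obtain ⟨hl1, hlL⟩ := hlmem
  -- abbreviations
  set Out : ℕ → ℕ → ℝ := fun ℓ t => ∑ j ∈ univ.filter (fun j => (i, j) ∈ E), x i j ℓ t with hOutdef
  set Inn : ℕ → ℕ → ℝ := fun ℓ t => ∑ j ∈ univ.filter (fun j => (j, i) ∈ E), x j i ℓ t with hInndef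
  set SQ : ℕ → ℝ := fun t => ∑ ℓ ∈ Finset.Icc l L, Q i ℓ t with hSQdef
  have shift : ∀ g : ℕ → ℝ, g (L + 1) = 0 →
      ∑ ℓ ∈ Finset.Icc l L, g (ℓ + 1) = ∑ ℓ ∈ Finset.Icc (l + 1) L, g ℓ := by
    intro g hg
    have h1 : ∑ ℓ ∈ Finset.Icc l L, g (ℓ + 1) = ∑ ℓ ∈ Finset.Icc (l + 1) (L + 1), g ℓ := by
      rw [← Finset.map_add_right_Icc, Finset.sum_map]; rfl
    rw [h1, Finset.sum_Icc_succ_top (by omega) g, hg, add_zero]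
  have hsplit : Finset.Icc l L = insert l (Finset.Icc (l + 1) L) := by
    ext m; simp [Finset.mem_Icc]; omega
  have hlnot : l ∉ Finset.Icc (l + 1) L := by simp [Finset.mem_Icc]
  -- step inequality
  have step : ∀ t, (∑ ℓ ∈ Finset.Icc l L, Out ℓ t) + SQ (t + 1)
      ≤ SQ t + ((∑ ℓ ∈ Finset.Icc (l + 1) L, Inn ℓ t) + ∑ ℓ ∈ Finset.Icc l L, a i ℓ t) := by
    intro t
    have hdyn' : SQ (t + 1) = (∑ ℓ ∈ Finset.Icc (l + 1) L, Q i ℓ t)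
        - (∑ ℓ ∈ Finset.Icc (l + 1) L, Out ℓ t)
        + (∑ ℓ ∈ Finset.Icc (l + 1) L, Inn ℓ t)
        + ∑ ℓ ∈ Finset.Icc l L, a i ℓ t := by
      have : SQ (t + 1) = ∑ ℓ ∈ Finset.Icc l L,
          (Q i (ℓ + 1) t - Out (ℓ + 1) t + Inn (ℓ + 1) t + a i ℓ t) := by
        refine Finset.sum_congr rfl fun ℓ hℓ => ?_
        rw [Finset.mem_Icc] at hℓ
        exact hdyn i hi ℓ (by rw [Finset.mem_Icc]; omega) t
      rw [this]
      have e1 : ∑ ℓ ∈ Finset.Icc l L, Q i (ℓ + 1) t = ∑ ℓ ∈ Finset.Icc (l + 1) L, Q i ℓ t :=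
        shift (fun ℓ => Q i ℓ t) (hQconv i (L + 1) t (by simp [Finset.mem_Icc]))
      have hz2 : Out (L + 1) t = 0 :=
        Finset.sum_eq_zero fun j _ => hxconv i j (L + 1) t (by simp [Finset.mem_Icc])
      have hz3 : Inn (L + 1) t = 0 :=
        Finset.sum_eq_zero fun j _ => hxconv j i (L + 1) t (by simp [Finset.mem_Icc])
      have e2 : ∑ ℓ ∈ Finset.Icc l L, Out (ℓ + 1) t = ∑ ℓ ∈ Finset.Icc (l + 1) L, Out ℓ t :=
        shift (fun ℓ => Out ℓ t) hz2
      have e3 : ∑ ℓ ∈ Finset.Icc l L, Inn (ℓ + 1) t = ∑ ℓ ∈ Finset.Icc (l + 1) L, Inn ℓ t :=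
        shift (fun ℓ => Inn ℓ t) hz3
      rw [← e1, ← e2, ← e3]
      simp [Finset.sum_add_distrib, Finset.sum_sub_distrib]
    have havl : Out l t ≤ Q i l t := havail i l (by rw [Finset.mem_Icc]; omega) t
    have hOsplit : ∑ ℓ ∈ Finset.Icc l L, Out ℓ t
        = Out l t + ∑ ℓ ∈ Finset.Icc (l + 1) L, Out ℓ t := by
      rw [hsplit, Finset.sum_insert hlnot]
    have hQsplit : SQ t = Q i l t + ∑ ℓ ∈ Finset.Icc (l + 1) L, Q i ℓ t := by
      rw [hSQdef]; simp only []
      rw [hsplit, Finset.sum_insert hlnot]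
    rw [hdyn', hOsplit, hQsplit]
    linarith
  -- cumulative inequality
  have cum : ∀ T : ℕ, (∑ t ∈ Finset.range T, ∑ ℓ ∈ Finset.Icc l L, Out ℓ t) + SQ T
      ≤ SQ 0 + ∑ t ∈ Finset.range T,
          ((∑ ℓ ∈ Finset.Icc (l + 1) L, Inn ℓ t) + ∑ ℓ ∈ Finset.Icc l L, a i ℓ t) := by
    intro T
    induction T with
    | zero => simp
    | succ T ih =>
        rw [Finset.sum_range_succ, Finset.sum_range_succ]
        have := step T
        linarith
  have hSQ0 : SQ 0 = 0 := by
    refine Finset.sum_eq_zero fun ℓ hℓ => ?_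
    rw [Finset.mem_Icc] at hℓ
    exact hQzero i ℓ (by rw [Finset.mem_Icc]; omega)
  have hSQnn : ∀ T, 0 ≤ SQ T := fun T => Finset.sum_nonneg fun ℓ _ => hQnn i ℓ T
  have key : ∀ T : ℕ, (∑ t ∈ Finset.range T, ∑ ℓ ∈ Finset.Icc l L, Out ℓ t)
      ≤ ∑ t ∈ Finset.range T,
          ((∑ ℓ ∈ Finset.Icc (l + 1) L, Inn ℓ t) + ∑ ℓ ∈ Finset.Icc l L, a i ℓ t) := by
    intro T
    have := cum T
    have h0 := hSQnn T
    rw [hSQ0] at this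
    linarith
  -- limits
  have hLHS : Tendsto (fun T : ℕ => (∑ t ∈ Finset.range T, ∑ ℓ ∈ Finset.Icc l L, Out ℓ t) / (T : ℝ))
      atTop (nhds (∑ ℓ ∈ Finset.Icc l L, ∑ j ∈ univ.filter (fun j => (i, j) ∈ E), xbar i j ℓ)) := by
    have h := tendsto_finset_sum (Finset.Icc l L)
      (fun ℓ _ => tendsto_finset_sum (univ.filter (fun j => (i, j) ∈ E))
        (fun j _ => hxbar i j ℓ))
    convert h using 2 with T
    rw [Finset.sum_comm]
    rw [Finset.sum_div]
    refine Finset.sum_congr rfl fun ℓ _ => ?_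
    rw [Finset.sum_comm, Finset.sum_div]
  have hRHS : Tendsto (fun T : ℕ => (∑ t ∈ Finset.range T,
        ((∑ ℓ ∈ Finset.Icc (l + 1) L, Inn ℓ t) + ∑ ℓ ∈ Finset.Icc l L, a i ℓ t)) / (T : ℝ))
      atTop (nhds ((∑ ℓ ∈ Finset.Icc (l + 1) L, ∑ j ∈ univ.filter (fun j => (j, i) ∈ E), xbar j i ℓ)
        + ∑ ℓ ∈ Finset.Icc l L, lam i ℓ)) := by
    have h1 : Tendsto (fun T : ℕ => (∑ t ∈ Finset.range T, ∑ ℓ ∈ Finset.Icc (l + 1) L, Inn ℓ t) / (T : ℝ))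
        atTop (nhds (∑ ℓ ∈ Finset.Icc (l + 1) L, ∑ j ∈ univ.filter (fun j => (j, i) ∈ E), xbar j i ℓ)) := by
      have h := tendsto_finset_sum (Finset.Icc (l + 1) L)
        (fun ℓ _ => tendsto_finset_sum (univ.filter (fun j => (j, i) ∈ E))
          (fun j _ => hxbar j i ℓ))
      convert h using 2 with T
      rw [Finset.sum_comm, Finset.sum_div]
      refine Finset.sum_congr rfl fun ℓ _ => ?_
      rw [Finset.sum_comm, Finset.sum_div]
    have h2 : Tendsto (fun T : ℕ => (∑ t ∈ Finset.range T, ∑ ℓ ∈ Finset.Icc l L, a i ℓ t) / (T : ℝ))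
        atTop (nhds (∑ ℓ ∈ Finset.Icc l L, lam i ℓ)) := by
      have h := tendsto_finset_sum (Finset.Icc l L) (fun ℓ _ => hlam i ℓ)
      convert h using 2 with T
      rw [Finset.sum_comm, Finset.sum_div]
    have := h1.add h2
    convert this using 2 with T
    rw [Finset.sum_add_distrib, add_div]
  refine le_of_tendsto_of_tendsto' hLHS hRHS fun T => ?_
  rcases Nat.eq_zero_or_pos T with h0 | hpos
  · simp [h0]
  · exact div_le_div_of_nonneg_right (key T) (Nat.cast_nonneg T) |>.trans_eq rfl
end

section
/- (Uniform boundedness of lifetime queues.) Suppose the lifetime queue dynamics, boundary conditions, and availability constraint hold, Q_i^{(l)}(0) = 0 for all i, l, and the arrivals are uniformly bounded: a_i^{(l)}(t) ≤ A_max for all i, l, t, for some constant A_max ≥ 0. Then the queue backlogs are uniformly bounded in time: there exists a constant M ≥ 0 (depending only on A_max, L, and |V|) such that Q_i^{(l)}(t) ≤ M for all i ∈ V, l ∈ {1,…,L}, and t ∈ ℕ. -/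
open Finset

/-- **Uniform boundedness of lifetime queues.**
Under the lifetime queue dynamics, boundary conditions, availability constraint, zero
initial queues, and uniformly bounded arrivals `a_i^{(l)}(t) ≤ A_max`, the queue backlogs
are uniformly bounded in time: there is a constant `M ≥ 0` with `Q_i^{(l)}(t) ≤ M` for all
`i ∈ V`, `l ∈ {1,…,L}`, and `t ∈ ℕ`. -/
theorem lifetime_queues_uniformly_bounded
    {V : Type*} [Fintype V] [DecidableEq V]
    (E : Finset (V × V)) (d : V) (L : ℕ) (hL : 1 ≤ L)
    (Q : V → ℕ → ℕ → ℝ) (x : V → V → ℕ → ℕ → ℝ) (a : V → ℕ → ℕ → ℝ)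
    (Amax : ℝ) (hAmax : 0 ≤ Amax)
    (hQnn : ∀ i l t, 0 ≤ Q i l t)
    (hxnn : ∀ i j l t, 0 ≤ x i j l t)
    (hann : ∀ i l t, 0 ≤ a i l t)
    (hQconv : ∀ i l t, l ∉ Finset.Icc 1 L → Q i l t = 0)
    (hxconv : ∀ i j l t, l ∉ Finset.Icc 1 L → x i j l t = 0)
    (hdyn : ∀ i, i ≠ d → ∀ l ∈ Finset.Icc 1 L, ∀ t : ℕ,
      Q i l (t + 1)
        = Q i (l + 1) t
          - (∑ j ∈ univ.filter (fun j => (i, j) ∈ E), x i j (l + 1) t)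
          + (∑ j ∈ univ.filter (fun j => (j, i) ∈ E), x j i (l + 1) t)
          + a i l t)
    (hbnd : ∀ l t, Q d l t = 0)
    (havail : ∀ i, ∀ l ∈ Finset.Icc 1 L, ∀ t : ℕ,
      (∑ j ∈ univ.filter (fun j => (i, j) ∈ E), x i j l t) ≤ Q i l t)
    (hQzero : ∀ i, ∀ l ∈ Finset.Icc 1 L, Q i l 0 = 0)
    (hA : ∀ i, ∀ l ∈ Finset.Icc 1 L, ∀ t : ℕ, a i l t ≤ Amax) :
    ∃ M : ℝ, 0 ≤ M ∧ ∀ i, ∀ l ∈ Finset.Icc 1 L, ∀ t : ℕ, Q i l t ≤ M := by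
  classical
  set n : ℝ := (Fintype.card V : ℝ) with hn
  have hn0 : 0 ≤ n := Nat.cast_nonneg _
  set S : ℕ → ℕ → ℝ := fun l t => ∑ i ∈ univ.filter (fun i => i ≠ d), Q i l t with hS
  have hSnn : ∀ l t, 0 ≤ S l t := fun l t =>
    Finset.sum_nonneg fun i _ => hQnn i l t
  have hQS : ∀ i l t, i ≠ d → Q i l t ≤ S l t := by
    intro i l t hi
    exact Finset.single_le_sum (f := fun j => Q j l t)
      (fun j _ => hQnn j l t) (by simp [hi])
  -- node d sends nothing
  have hout_d : ∀ l t, (∑ j ∈ univ.filter (fun j => (d, j) ∈ E), x d j l t) ≤ 0 := by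
    intro l t
    by_cases hl : l ∈ Finset.Icc 1 L
    · calc (∑ j ∈ univ.filter (fun j => (d, j) ∈ E), x d j l t) ≤ Q d l t :=
            havail d l hl t
        _ = 0 := hbnd l t
    · simp [hxconv _ _ _ _ hl]
  -- total inflow = total outflow
  have hswap : ∀ l t,
      (∑ i : V, ∑ j ∈ univ.filter (fun j => (j, i) ∈ E), x j i l t)
        = ∑ i : V, ∑ j ∈ univ.filter (fun j => (i, j) ∈ E), x i j l t := by
    intro l t
    simp only [Finset.sum_filter]
    exact Finset.sum_comm
  -- inflow to non-d nodes ≤ outflow from non-d nodes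
  have hflow : ∀ l t,
      (∑ i ∈ univ.filter (fun i => i ≠ d), ∑ j ∈ univ.filter (fun j => (j, i) ∈ E), x j i l t)
        ≤ ∑ i ∈ univ.filter (fun i => i ≠ d), ∑ j ∈ univ.filter (fun j => (i, j) ∈ E), x i j l t := by
    intro l t
    have h1 : (∑ i ∈ univ.filter (fun i => i ≠ d),
          ∑ j ∈ univ.filter (fun j => (j, i) ∈ E), x j i l t)
        ≤ ∑ i : V, ∑ j ∈ univ.filter (fun j => (j, i) ∈ E), x j i l t := by
      apply Finset.sum_le_sum_of_subset_of_nonneg (Finset.filter_subset _ _)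
      intro i _ _
      exact Finset.sum_nonneg fun j _ => hxnn j i l t
    have h2 : (∑ i : V, ∑ j ∈ univ.filter (fun j => (i, j) ∈ E), x i j l t)
        = (∑ j ∈ univ.filter (fun j => (d, j) ∈ E), x d j l t)
          + ∑ i ∈ univ.erase d, ∑ j ∈ univ.filter (fun j => (i, j) ∈ E), x i j l t :=
      (Finset.add_sum_erase _ _ (Finset.mem_univ d)).symm
    have h3 : (univ.filter (fun i => i ≠ d)) = univ.erase d := Finset.filter_ne' _ _
    calc (∑ i ∈ univ.filter (fun i => i ≠ d),
          ∑ j ∈ univ.filter (fun j => (j, i) ∈ E), x j i l t)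
        ≤ ∑ i : V, ∑ j ∈ univ.filter (fun j => (j, i) ∈ E), x j i l t := h1
      _ = ∑ i : V, ∑ j ∈ univ.filter (fun j => (i, j) ∈ E), x i j l t := hswap l t
      _ = (∑ j ∈ univ.filter (fun j => (d, j) ∈ E), x d j l t)
          + ∑ i ∈ univ.erase d, ∑ j ∈ univ.filter (fun j => (i, j) ∈ E), x i j l t := h2
      _ ≤ 0 + ∑ i ∈ univ.erase d, ∑ j ∈ univ.filter (fun j => (i, j) ∈ E), x i j l t := by
          gcongr; exact hout_d l t
      _ = ∑ i ∈ univ.filter (fun i => i ≠ d), ∑ j ∈ univ.filter (fun j => (i, j) ∈ E), x i j l t := by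
          rw [zero_add, h3]
  -- arrivals bound
  have harr : ∀ l t, l ∈ Finset.Icc 1 L →
      (∑ i ∈ univ.filter (fun i => i ≠ d), a i l t) ≤ n * Amax := by
    intro l t hl
    calc (∑ i ∈ univ.filter (fun i => i ≠ d), a i l t)
        ≤ ∑ _i ∈ univ.filter (fun i => i ≠ d), Amax :=
          Finset.sum_le_sum fun i _ => hA i l hl t
      _ = ((univ.filter (fun i => i ≠ d)).card : ℝ) * Amax := by
          rw [Finset.sum_const, nsmul_eq_mul]
      _ ≤ n * Amax := by
          apply mul_le_mul_of_nonneg_right _ hAmax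
          have : (univ.filter (fun i => i ≠ d)).card ≤ Fintype.card V :=
            (Finset.card_le_card (Finset.subset_univ _)).trans_eq Finset.card_univ
          rw [hn]
          exact_mod_cast this
  -- key induction
  have key : ∀ t l, 1 ≤ l → S l t ≤ ((L + 1 - l : ℕ) : ℝ) * n * Amax := by
    intro t
    induction t with
    | zero =>
      intro l hl
      have hz : S l 0 = 0 := by
        apply Finset.sum_eq_zero
        intro i _
        by_cases hl' : l ∈ Finset.Icc 1 L
        · exact hQzero i l hl'
        · exact hQconv i l 0 hl'
      rw [hz]
      positivity
    | succ t ih =>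
      intro l hl
      by_cases hl' : l ≤ L
      · have hlI : l ∈ Finset.Icc 1 L := by simp [hl, hl']
        have hexp : S l (t + 1)
            = S (l + 1) t
              - (∑ i ∈ univ.filter (fun i => i ≠ d),
                  ∑ j ∈ univ.filter (fun j => (i, j) ∈ E), x i j (l + 1) t)
              + (∑ i ∈ univ.filter (fun i => i ≠ d),
                  ∑ j ∈ univ.filter (fun j => (j, i) ∈ E), x j i (l + 1) t)
              + (∑ i ∈ univ.filter (fun i => i ≠ d), a i l t) := by
          simp only [hS]
          rw [← Finset.sum_sub_distrib, ← Finset.sum_add_distrib, ← Finset.sum_add_distrib]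
          apply Finset.sum_congr rfl
          intro i hi
          have hi' : i ≠ d := (Finset.mem_filter.mp hi).2
          exact hdyn i hi' l hlI t
        have hstep : S l (t + 1) ≤ S (l + 1) t + n * Amax := by
          rw [hexp]
          have := hflow (l + 1) t
          have := harr l t hlI
          linarith
        have hsplit : (L + 1 - l : ℕ) = (L + 1 - (l + 1) : ℕ) + 1 := by omega
        have hih := ih (l + 1) (by omega)
        calc S l (t + 1) ≤ S (l + 1) t + n * Amax := hstep
          _ ≤ ((L + 1 - (l + 1) : ℕ) : ℝ) * n * Amax + n * Amax := by linarith
          _ = ((L + 1 - l : ℕ) : ℝ) * n * Amax := by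
              rw [hsplit]
              push_cast
              ring
      · have hz : S l (t + 1) = 0 := by
          apply Finset.sum_eq_zero
          intro i _
          exact hQconv i l (t + 1) (by simp; omega)
        rw [hz]
        positivity
  refine ⟨(L : ℝ) * n * Amax, by positivity, ?_⟩
  intro i l hlI t
  rcases Finset.mem_Icc.mp hlI with ⟨hl1, hl2⟩
  by_cases hi : i = d
  · rw [hi, hbnd]
    positivity
  · calc Q i l t ≤ S l t := hQS i l t hi
      _ ≤ ((L + 1 - l : ℕ) : ℝ) * n * Amax := key t l hl1
      _ ≤ (L : ℝ) * n * Amax := by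
          apply mul_le_mul_of_nonneg_right _ hAmax
          apply mul_le_mul_of_nonneg_right _ hn0
          exact_mod_cast by omega
end

section
/- (Flow-matching lemma for the randomized policy, Appendix B.) Under the flow-conservation and positive-denominator assumptions, define the per-lifetime transmission probabilities α_i^{(l)} = x_{i→}^{(l)} / D_l for l ∈ {1,…,L}, and the transition probabilities α_i^{(ℓ,l)} = ( Π_{k=l+1}^{ℓ} (1 − α_i^{(k)}) ) · α_i^{(l)} for 1 ≤ l ≤ ℓ ≤ L (with the empty product equal to 1, so α_i^{(l,l)} = α_i^{(l)}). Then for every lifetime l ∈ {1,…,L}: x_{i→}^{(l)} = Σ_{ℓ=l}^{L} α_i^{(ℓ,l)} · x̃_{→i}^{(ℓ)}, where x̃_{→i}^{(ℓ)} = x_{→i}^{(ℓ+1)} + λ_i^{(ℓ)}. -/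
open Finset

private lemma sum_Icc_bot' {M : Type*} [AddCommMonoid M] {a b : ℕ} (h : a ≤ b) (f : ℕ → M) :
    ∑ k ∈ Finset.Icc a b, f k = f a + ∑ k ∈ Finset.Icc (a + 1) b, f k := by
  rw [← Finset.sum_insert (by simp : a ∉ Finset.Icc (a + 1) b)]
  congr 1
  ext k
  simp only [Finset.mem_Icc, Finset.mem_insert]
  omega

private lemma prod_Icc_bot' {M : Type*} [CommMonoid M] {a b : ℕ} (h : a ≤ b) (f : ℕ → M) :
    ∏ k ∈ Finset.Icc a b, f k = f a * ∏ k ∈ Finset.Icc (a + 1) b, f k := by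
  rw [← Finset.prod_insert (by simp : a ∉ Finset.Icc (a + 1) b)]
  congr 1
  ext k
  simp only [Finset.mem_Icc, Finset.mem_insert]
  omega

/-- **Flow-matching lemma for the randomized policy (Appendix B).**
Under the lifetime-driven flow conservation and positive-denominator assumptions, with
per-lifetime transmission probabilities `α_i^{(l)} = x_{i→}^{(l)} / D_l` and transition
probabilities `α_i^{(ℓ,l)} = (Π_{k=l+1}^{ℓ} (1 − α_i^{(k)})) · α_i^{(l)}`, one has for
every lifetime `l ∈ {1,…,L}`:
`x_{i→}^{(l)} = Σ_{ℓ=l}^{L} α_i^{(ℓ,l)} · x̃_{→i}^{(ℓ)}` where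
`x̃_{→i}^{(ℓ)} = x_{→i}^{(ℓ+1)} + λ_i^{(ℓ)}`. -/
theorem randomized_policy_flow_matching
    {J : Type*} [DecidableEq J] (L : ℕ) (hL : 1 ≤ L)
    (δ : Finset J)
    (x : J → ℕ → ℝ) (xin lam : ℕ → ℝ)
    (hxnn : ∀ j l, 0 ≤ x j l) (hxinnn : ∀ l, 0 ≤ xin l) (hlamnn : ∀ l, 0 ≤ lam l)
    (hxconv : ∀ j l, l ∉ Finset.Icc 1 L → x j l = 0)
    (hxinconv : ∀ l, l ∉ Finset.Icc 1 L → xin l = 0)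
    (hlamconv : ∀ l, l ∉ Finset.Icc 1 L → lam l = 0)
    -- denominator D_l = x̃_{→i}^{(≥l)} − x_{i→}^{(≥l+1)}
    (D : ℕ → ℝ)
    (hD : ∀ l, D l
      = ((∑ ℓ ∈ Finset.Icc (l + 1) L, xin ℓ) + (∑ ℓ ∈ Finset.Icc l L, lam ℓ))
        - (∑ ℓ ∈ Finset.Icc (l + 1) L, ∑ j ∈ δ, x j ℓ))
    -- lifetime-driven flow conservation: x_{i→}^{(≥l)} ≤ x̃_{→i}^{(≥l)}
    (hcons : ∀ l ∈ Finset.Icc 1 L,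
      (∑ ℓ ∈ Finset.Icc l L, ∑ j ∈ δ, x j ℓ)
        ≤ (∑ ℓ ∈ Finset.Icc (l + 1) L, xin ℓ) + (∑ ℓ ∈ Finset.Icc l L, lam ℓ))
    -- positive denominators
    (hDpos : ∀ l ∈ Finset.Icc 1 L, 0 < D l)
    -- per-lifetime transmission probabilities α_i^{(l)} = x_{i→}^{(l)} / D_l
    (α : ℕ → ℝ)
    (hα : ∀ l, α l = (∑ j ∈ δ, x j l) / D l)
    -- transition probabilities α_i^{(ℓ,l)}
    (αt : ℕ → ℕ → ℝ)
    (hαt : ∀ ℓ l, αt ℓ l = (∏ k ∈ Finset.Icc (l + 1) ℓ, (1 - α k)) * α l) :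
    ∀ l ∈ Finset.Icc 1 L,
      (∑ j ∈ δ, x j l)
        = ∑ ℓ ∈ Finset.Icc l L, αt ℓ l * (xin (ℓ + 1) + lam ℓ) := by
  have hDne : ∀ l ∈ Finset.Icc 1 L, D l ≠ 0 := fun l hl => ne_of_gt (hDpos l hl)
  have key : ∀ n l, 1 ≤ l → l ≤ L → L - l = n →
      (∑ ℓ ∈ Finset.Icc l L, (∏ k ∈ Finset.Icc (l + 1) ℓ, (1 - α k)) * (xin (ℓ + 1) + lam ℓ))
        = D l := by
    intro n
    induction n with
    | zero =>
      intro l h1 h2 h3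
      have hlL : l = L := by omega
      subst hlL
      rw [Finset.Icc_self, Finset.sum_singleton,
        Finset.Icc_eq_empty (by omega : ¬ l + 1 ≤ l), Finset.prod_empty, one_mul,
        hxinconv (l + 1) (by simp only [Finset.mem_Icc, not_and]; omega), hD]
      rw [Finset.Icc_eq_empty (by omega : ¬ l + 1 ≤ l), Finset.Icc_self]
      simp
    | succ n ih =>
      intro l h1 h2 h3
      have hlt : l < L := by omega
      rw [sum_Icc_bot' h2]
      rw [Finset.Icc_eq_empty (by omega : ¬ l + 1 ≤ l), Finset.prod_empty, one_mul]
      have hsplit : ∀ ℓ ∈ Finset.Icc (l + 1) L,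
          (∏ k ∈ Finset.Icc (l + 1) ℓ, (1 - α k)) * (xin (ℓ + 1) + lam ℓ)
            = (1 - α (l + 1)) *
              ((∏ k ∈ Finset.Icc (l + 2) ℓ, (1 - α k)) * (xin (ℓ + 1) + lam ℓ)) := by
        intro ℓ hℓ
        rw [prod_Icc_bot' (Finset.mem_Icc.mp hℓ).1]
        ring
      rw [Finset.sum_congr rfl hsplit, ← Finset.mul_sum,
        ih (l + 1) (by omega) (by omega) (by omega)]
      have hne : D (l + 1) ≠ 0 := hDne _ (by simp only [Finset.mem_Icc]; omega)
      rw [hα (l + 1)]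
      have hmul : (1 - (∑ j ∈ δ, x j (l + 1)) / D (l + 1)) * D (l + 1)
          = D (l + 1) - ∑ j ∈ δ, x j (l + 1) := by field_simp
      rw [hmul, hD l, hD (l + 1),
        sum_Icc_bot' (by omega : l + 1 ≤ L) xin,
        sum_Icc_bot' (by omega : l ≤ L) lam,
        sum_Icc_bot' (by omega : l + 1 ≤ L) (fun ℓ => ∑ j ∈ δ, x j ℓ)]
      ring
  intro l hl
  obtain ⟨h1, h2⟩ := Finset.mem_Icc.mp hl
  have : (∑ ℓ ∈ Finset.Icc l L, αt ℓ l * (xin (ℓ + 1) + lam ℓ))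
      = α l * ∑ ℓ ∈ Finset.Icc l L, (∏ k ∈ Finset.Icc (l + 1) ℓ, (1 - α k)) * (xin (ℓ + 1) + lam ℓ) := by
    rw [Finset.mul_sum]
    refine Finset.sum_congr rfl fun ℓ hℓ => ?_
    rw [hαt]
    ring
  rw [this, key (L - l) l h1 h2 rfl, hα, div_mul_cancel₀ _ (hDne l hl)]
end

section
/- (Lyapunov drift-plus-penalty bound for the virtual network, inequality (15)/(19).) There exists a constant B ≥ 0, depending only on |V|, L, the link capacities C_{ij}, the reliability level γ, and the arrival bound A_max (and not on t, on the queue values, on the flows, or on the realized arrivals), such that for every time slot t, every arrival realization with 0 ≤ a_i^{(l)}(t) ≤ A_max, and every admissible virtual flow ν(t): L(t+1) − L(t) + V·h(ν(t)) ≤ B + γ A(t) U_d(t) − Σ_{i∈V\{d}} Σ_{l=1}^{L} a_i^{(≥l)}(t) U_i^{(l)}(t) − Σ_{(i,j)∈E} Σ_{l=1}^{L} w_{ij}^{(l)}(t) ν_{ij}^{(l)}(t). -/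
open Finset

/-- Outgoing flow of lifetime `l` at node `i`: `ν_{i→}^{(l)}`. -/
def flowOut {V : Type*} [Fintype V] [DecidableEq V]
    (E : Finset (V × V)) (ν : V → V → ℕ → ℝ) (i : V) (l : ℕ) : ℝ :=
  ∑ j ∈ Finset.univ.filter (fun j => (i, j) ∈ E), ν i j l

/-- Incoming flow of lifetime `l` at node `i`: `ν_{→i}^{(l)}`. -/
def flowIn {V : Type*} [Fintype V] [DecidableEq V]
    (E : Finset (V × V)) (ν : V → V → ℕ → ℝ) (i : V) (l : ℕ) : ℝ :=
  ∑ j ∈ Finset.univ.filter (fun j => (j, i) ∈ E), ν j i l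

section Aux
variable {V : Type*} [Fintype V] [DecidableEq V]

lemma sq_max_zero_le (x : ℝ) : (max x 0)^2 ≤ x^2 := by
  rcases le_total x 0 with h|h
  · rw [max_eq_right h]; simpa using sq_nonneg x
  · rw [max_eq_left h]

lemma sum_fiber_fst (E : Finset (V × V)) (f : V → V → ℝ) :
    ∑ p ∈ E, f p.1 p.2 = ∑ i, ∑ j ∈ Finset.univ.filter (fun j => (i, j) ∈ E), f i j := by
  have h1 : ∀ i, ∑ j ∈ Finset.univ.filter (fun j => (i, j) ∈ E), f i j
      = ∑ j, if (i, j) ∈ E then f i j else 0 := by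
    intro i; rw [Finset.sum_filter]
  simp_rw [h1]
  rw [← Finset.sum_product' (s := Finset.univ) (t := Finset.univ)
    (f := fun i j => if (i, j) ∈ E then f i j else 0)]
  rw [Finset.univ_product_univ]
  rw [Finset.sum_ite_mem, Finset.univ_inter]

lemma sum_fiber_snd (E : Finset (V × V)) (f : V → V → ℝ) :
    ∑ p ∈ E, f p.1 p.2 = ∑ j, ∑ i ∈ Finset.univ.filter (fun i => (i, j) ∈ E), f i j := by
  have h1 : ∀ j, ∑ i ∈ Finset.univ.filter (fun i => (i, j) ∈ E), f i j
      = ∑ i, if (i, j) ∈ E then f i j else 0 := by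
    intro j; rw [Finset.sum_filter]
  simp_rw [h1]
  rw [← Finset.sum_product_right' (s := Finset.univ) (t := Finset.univ)
    (f := fun i j => if (i, j) ∈ E then f i j else 0)]
  rw [Finset.univ_product_univ]
  rw [Finset.sum_ite_mem, Finset.univ_inter]

lemma swap_tri (L : ℕ) (u g : ℕ → ℝ) :
    ∑ l ∈ Finset.Icc 1 L, u l * ∑ ℓ ∈ Finset.Icc l L, g ℓ
      = ∑ ℓ ∈ Finset.Icc 1 L, (∑ k ∈ Finset.Icc 1 ℓ, u k) * g ℓ := by
  simp_rw [Finset.mul_sum, Finset.sum_mul]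
  exact Finset.sum_comm' (by intro x y; simp only [Finset.mem_Icc]; omega)

lemma swap_tri' (L : ℕ) (u g : ℕ → ℝ) :
    ∑ l ∈ Finset.Icc 1 L, u l * ∑ ℓ ∈ Finset.Icc (l + 1) L, g ℓ
      = ∑ ℓ ∈ Finset.Icc 1 L, (∑ k ∈ Finset.Icc 1 (ℓ - 1), u k) * g ℓ := by
  simp_rw [Finset.mul_sum, Finset.sum_mul]
  exact Finset.sum_comm' (by intro x y; simp only [Finset.mem_Icc]; omega)

lemma erase_to_univ (d : V) (F : V → ℝ) (hF : F d = 0) :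
    ∑ i ∈ Finset.univ.erase d, F i = ∑ i, F i := by
  rw [← Finset.sum_erase_add Finset.univ F (Finset.mem_univ d), hF, add_zero]

lemma out_id (E : Finset (V × V)) (d : V) (L : ℕ) (U : V → ℕ → ℝ) (ν : V → V → ℕ → ℝ)
    (hU0 : ∀ l, U d l = 0) :
    ∑ i ∈ Finset.univ.erase d, ∑ l ∈ Finset.Icc 1 L,
        U i l * ∑ ℓ ∈ Finset.Icc l L, flowOut E ν i ℓ
      = ∑ p ∈ E, ∑ ℓ ∈ Finset.Icc 1 L, (∑ k ∈ Finset.Icc 1 ℓ, U p.1 k) * ν p.1 p.2 ℓ := by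
  rw [erase_to_univ d _ (by simp [hU0])]
  rw [sum_fiber_fst E (fun i j => ∑ ℓ ∈ Finset.Icc 1 L, (∑ k ∈ Finset.Icc 1 ℓ, U i k) * ν i j ℓ)]
  refine Finset.sum_congr rfl fun i _ => ?_
  rw [swap_tri L (U i) (flowOut E ν i)]
  simp_rw [flowOut, Finset.mul_sum]
  exact Finset.sum_comm

lemma in_id (E : Finset (V × V)) (d : V) (L : ℕ) (U : V → ℕ → ℝ) (ν : V → V → ℕ → ℝ)
    (hU0 : ∀ l, U d l = 0) :
    ∑ i ∈ Finset.univ.erase d, ∑ l ∈ Finset.Icc 1 L,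
        U i l * ∑ ℓ ∈ Finset.Icc (l + 1) L, flowIn E ν i ℓ
      = ∑ p ∈ E, ∑ ℓ ∈ Finset.Icc 1 L, (∑ k ∈ Finset.Icc 1 (ℓ - 1), U p.2 k) * ν p.1 p.2 ℓ := by
  rw [erase_to_univ d _ (by simp [hU0])]
  rw [sum_fiber_snd E
    (fun i j => ∑ ℓ ∈ Finset.Icc 1 L, (∑ k ∈ Finset.Icc 1 (ℓ - 1), U j k) * ν i j ℓ)]
  refine Finset.sum_congr rfl fun j _ => ?_
  rw [swap_tri' L (U j) (flowIn E ν j)]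
  simp_rw [flowIn, Finset.mul_sum]
  exact Finset.sum_comm

lemma d_id (E : Finset (V × V)) (d : V) (L : ℕ) (Ud : ℝ) (ν : V → V → ℕ → ℝ) :
    Ud * ∑ l ∈ Finset.Icc 1 L, flowIn E ν d l
      = ∑ p ∈ E, ∑ l ∈ Finset.Icc 1 L, (if p.2 = d then Ud else 0) * ν p.1 p.2 l := by
  rw [sum_fiber_snd E (fun i j => ∑ l ∈ Finset.Icc 1 L, (if j = d then Ud else 0) * ν i j l)]
  have h1 : ∀ j : V, ∑ i ∈ Finset.univ.filter (fun i => (i, j) ∈ E),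
      ∑ l ∈ Finset.Icc 1 L, (if j = d then Ud else 0) * ν i j l
      = if j = d then Ud * ∑ i ∈ Finset.univ.filter (fun i => (i, j) ∈ E),
          ∑ l ∈ Finset.Icc 1 L, ν i j l else 0 := by
    intro j; split <;> simp [Finset.mul_sum]
  simp_rw [h1]
  rw [Finset.sum_ite_eq' Finset.univ d]
  simp only [Finset.mem_univ, if_true]
  congr 1
  simp_rw [flowIn]
  exact Finset.sum_comm

end Aux

/-- **Lyapunov drift-plus-penalty bound for the virtual network (inequality (15)/(19)).**
There is a constant `B ≥ 0`, depending only on the network parameters (`|V|`, `L`, the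
capacities `C`, the reliability level `γ`, and the arrival bound `A_max`) and not on the
queue values, the flows, or the realized arrivals, such that for every virtual-queue state,
every arrival realization bounded by `A_max`, and every admissible virtual flow, the
one-slot Lyapunov drift plus `V`-weighted cost is bounded by
`B + γ A U_d − Σ_{i≠d,l} a_i^{(≥l)} U_i^{(l)} − Σ_{(i,j)∈E,l} w_{ij}^{(l)} ν_{ij}^{(l)}`. -/
theorem drift_plus_penalty_bound
    {V : Type*} [Fintype V] [DecidableEq V]
    (E : Finset (V × V)) (d : V) (L : ℕ) (hL : 1 ≤ L)
    (C e : V → V → ℝ) (γ Vc Amax : ℝ)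
    (hC : ∀ p ∈ E, 0 ≤ C p.1 p.2) (he : ∀ p ∈ E, 0 ≤ e p.1 p.2)
    (hγ0 : 0 ≤ γ) (hγ1 : γ ≤ 1) (hVc : 0 ≤ Vc) (hAmax : 0 ≤ Amax) :
    ∃ B : ℝ, 0 ≤ B ∧
      ∀ (Ud : ℝ) (U : V → ℕ → ℝ) (a : V → ℕ → ℝ) (ν : V → V → ℕ → ℝ),
        0 ≤ Ud →
        (∀ i l, 0 ≤ U i l) →
        (∀ l, U d l = 0) →
        (∀ i l, 0 ≤ a i l) →
        (∀ i, ∀ l ∈ Finset.Icc 1 L, a i l ≤ Amax) →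
        (∀ i j l, 0 ≤ ν i j l) →
        (∀ p ∈ E, (∑ l ∈ Finset.Icc 1 L, ν p.1 p.2 l) ≤ C p.1 p.2) →
        -- L(t+1) − L(t) + V·h(ν(t))
        ((max (Ud + γ * (∑ i, ∑ l ∈ Finset.Icc 1 L, a i l)
              - (∑ l ∈ Finset.Icc 1 L, flowIn E ν d l)) 0) ^ 2
          + ∑ i ∈ Finset.univ.erase d, ∑ l ∈ Finset.Icc 1 L,
              (max (U i l
                + (∑ ℓ ∈ Finset.Icc l L, flowOut E ν i ℓ)
                - (∑ ℓ ∈ Finset.Icc (l + 1) L, flowIn E ν i ℓ)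
                - (∑ ℓ ∈ Finset.Icc l L, a i ℓ)) 0) ^ 2) / 2
        - (Ud ^ 2
            + ∑ i ∈ Finset.univ.erase d, ∑ l ∈ Finset.Icc 1 L, (U i l) ^ 2) / 2
        + Vc * (∑ p ∈ E, e p.1 p.2 * (∑ l ∈ Finset.Icc 1 L, ν p.1 p.2 l))
        ≤ B
          + γ * (∑ i, ∑ l ∈ Finset.Icc 1 L, a i l) * Ud
          - (∑ i ∈ Finset.univ.erase d, ∑ l ∈ Finset.Icc 1 L,
              (∑ ℓ ∈ Finset.Icc l L, a i ℓ) * U i l)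
          - (∑ p ∈ E, ∑ l ∈ Finset.Icc 1 L,
              (- Vc * e p.1 p.2 - (∑ k ∈ Finset.Icc 1 l, U p.1 k)
                + (if p.2 = d then Ud else ∑ k ∈ Finset.Icc 1 (l - 1), U p.2 k))
              * ν p.1 p.2 l) := by
  classical
  set Cap : ℝ := ∑ p ∈ E, C p.1 p.2 with hCap_def
  have hCap : 0 ≤ Cap := Finset.sum_nonneg fun p hp => hC p hp
  set M : ℝ := (Fintype.card V : ℝ) * L * Amax + 2 * Cap + (L : ℝ) * Amax with hM_def
  have hM : 0 ≤ M := by positivity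
  refine ⟨((Fintype.card V : ℝ) * L + 1) * M ^ 2 / 2, by positivity, ?_⟩
  intro Ud U a ν hUd hU hU0 ha haM hν hνC
  set A : ℝ := ∑ i, ∑ l ∈ Finset.Icc 1 L, a i l with hA_def
  set Fd : ℝ := ∑ l ∈ Finset.Icc 1 L, flowIn E ν d l with hFd_def
  set Tot : ℝ := ∑ p ∈ E, ∑ l ∈ Finset.Icc 1 L, ν p.1 p.2 l with hTot_def
  have hTot0 : 0 ≤ Tot :=
    Finset.sum_nonneg fun p _ => Finset.sum_nonneg fun l _ => hν _ _ _
  have hTotCap : Tot ≤ Cap := Finset.sum_le_sum fun p hp => hνC p hp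
  have hsA : ∀ i, ∑ l ∈ Finset.Icc 1 L, a i l ≤ (L : ℝ) * Amax := by
    intro i
    calc ∑ l ∈ Finset.Icc 1 L, a i l ≤ ∑ _l ∈ Finset.Icc 1 L, Amax :=
          Finset.sum_le_sum fun l hl => haM i l hl
      _ = (L : ℝ) * Amax := by
          rw [Finset.sum_const, Nat.card_Icc, nsmul_eq_mul]; norm_num
  have hA0 : 0 ≤ A :=
    Finset.sum_nonneg fun i _ => Finset.sum_nonneg fun l _ => ha _ _
  have hAub : A ≤ (Fintype.card V : ℝ) * ((L : ℝ) * Amax) := by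
    calc A ≤ ∑ _i : V, (L : ℝ) * Amax := Finset.sum_le_sum fun i _ => hsA i
      _ = (Fintype.card V : ℝ) * ((L : ℝ) * Amax) := by
          rw [Finset.sum_const, nsmul_eq_mul, Finset.card_univ]
  have hOutNN : ∀ i l, 0 ≤ flowOut E ν i l := fun i l =>
    Finset.sum_nonneg fun j _ => hν _ _ _
  have hInNN : ∀ i l, 0 ≤ flowIn E ν i l := fun i l =>
    Finset.sum_nonneg fun j _ => hν _ _ _
  have hTotOut : Tot = ∑ i, ∑ ℓ ∈ Finset.Icc 1 L, flowOut E ν i ℓ := by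
    rw [hTot_def, sum_fiber_fst E (fun i j => ∑ l ∈ Finset.Icc 1 L, ν i j l)]
    refine Finset.sum_congr rfl fun i _ => ?_
    simp_rw [flowOut]
    exact Finset.sum_comm
  have hTotIn : Tot = ∑ j, ∑ ℓ ∈ Finset.Icc 1 L, flowIn E ν j ℓ := by
    rw [hTot_def, sum_fiber_snd E (fun i j => ∑ l ∈ Finset.Icc 1 L, ν i j l)]
    refine Finset.sum_congr rfl fun j _ => ?_
    simp_rw [flowIn]
    exact Finset.sum_comm
  have hSout : ∀ (i : V) (l : ℕ), 1 ≤ l →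
      (0 ≤ ∑ ℓ ∈ Finset.Icc l L, flowOut E ν i ℓ ∧
        ∑ ℓ ∈ Finset.Icc l L, flowOut E ν i ℓ ≤ Tot) := by
    intro i l hl
    constructor
    · exact Finset.sum_nonneg fun ℓ _ => hOutNN i ℓ
    · calc ∑ ℓ ∈ Finset.Icc l L, flowOut E ν i ℓ
          ≤ ∑ ℓ ∈ Finset.Icc 1 L, flowOut E ν i ℓ :=
            Finset.sum_le_sum_of_subset_of_nonneg (Finset.Icc_subset_Icc_left hl)
              (fun ℓ _ _ => hOutNN i ℓ)
        _ ≤ ∑ i', ∑ ℓ ∈ Finset.Icc 1 L, flowOut E ν i' ℓ :=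
            Finset.single_le_sum
              (fun i' _ => Finset.sum_nonneg fun ℓ _ => hOutNN i' ℓ) (Finset.mem_univ i)
        _ = Tot := hTotOut.symm
  have hSin : ∀ (i : V) (l : ℕ),
      (0 ≤ ∑ ℓ ∈ Finset.Icc (l + 1) L, flowIn E ν i ℓ ∧
        ∑ ℓ ∈ Finset.Icc (l + 1) L, flowIn E ν i ℓ ≤ Tot) := by
    intro i l
    constructor
    · exact Finset.sum_nonneg fun ℓ _ => hInNN i ℓ
    · calc ∑ ℓ ∈ Finset.Icc (l + 1) L, flowIn E ν i ℓ
          ≤ ∑ ℓ ∈ Finset.Icc 1 L, flowIn E ν i ℓ :=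
            Finset.sum_le_sum_of_subset_of_nonneg
              (Finset.Icc_subset_Icc_left (Nat.one_le_iff_ne_zero.mpr (Nat.succ_ne_zero l)))
              (fun ℓ _ _ => hInNN i ℓ)
        _ ≤ ∑ i', ∑ ℓ ∈ Finset.Icc 1 L, flowIn E ν i' ℓ :=
            Finset.single_le_sum
              (fun i' _ => Finset.sum_nonneg fun ℓ _ => hInNN i' ℓ) (Finset.mem_univ i)
        _ = Tot := hTotIn.symm
  have hFd0 : 0 ≤ Fd := Finset.sum_nonneg fun l _ => hInNN d l
  have hFdTot : Fd ≤ Tot := by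
    rw [hTotIn]
    exact Finset.single_le_sum
      (fun i' _ => Finset.sum_nonneg fun ℓ _ => hInNN i' ℓ) (Finset.mem_univ d)
  have hSa : ∀ (i : V) (l : ℕ), 1 ≤ l →
      (0 ≤ ∑ ℓ ∈ Finset.Icc l L, a i ℓ ∧ ∑ ℓ ∈ Finset.Icc l L, a i ℓ ≤ (L : ℝ) * Amax) := by
    intro i l hl
    constructor
    · exact Finset.sum_nonneg fun ℓ _ => ha _ _
    · calc ∑ ℓ ∈ Finset.Icc l L, a i ℓ ≤ ∑ ℓ ∈ Finset.Icc 1 L, a i ℓ :=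
            Finset.sum_le_sum_of_subset_of_nonneg (Finset.Icc_subset_Icc_left hl)
              (fun ℓ _ _ => ha _ _)
        _ ≤ (L : ℝ) * Amax := hsA i
  -- quadratic bound for the destination queue
  have hq1 : (max (Ud + γ * A - Fd) 0) ^ 2
      ≤ Ud ^ 2 + 2 * (Ud * (γ * A - Fd)) + M ^ 2 := by
    have h := sq_max_zero_le (Ud + γ * A - Fd)
    have hγA0 : 0 ≤ γ * A := mul_nonneg hγ0 hA0
    have hγA1 : γ * A ≤ A := by nlinarith
    have ht : (γ * A - Fd) ^ 2 ≤ M ^ 2 := by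
      apply sq_le_sq' <;> rw [hM_def] <;> nlinarith
    linarith [h, ht]
  -- quadratic bound for each node queue
  have hq2 : ∀ i ∈ Finset.univ.erase d, ∀ l ∈ Finset.Icc 1 L,
      (max (U i l + (∑ ℓ ∈ Finset.Icc l L, flowOut E ν i ℓ)
        - (∑ ℓ ∈ Finset.Icc (l + 1) L, flowIn E ν i ℓ)
        - (∑ ℓ ∈ Finset.Icc l L, a i ℓ)) 0) ^ 2
      ≤ U i l ^ 2 + 2 * (U i l * ((∑ ℓ ∈ Finset.Icc l L, flowOut E ν i ℓ)
          - (∑ ℓ ∈ Finset.Icc (l + 1) L, flowIn E ν i ℓ)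
          - (∑ ℓ ∈ Finset.Icc l L, a i ℓ))) + M ^ 2 := by
    intro i _ l hl
    have hl1 : 1 ≤ l := (Finset.mem_Icc.mp hl).1
    have h := sq_max_zero_le (U i l + (∑ ℓ ∈ Finset.Icc l L, flowOut E ν i ℓ)
        - (∑ ℓ ∈ Finset.Icc (l + 1) L, flowIn E ν i ℓ)
        - (∑ ℓ ∈ Finset.Icc l L, a i ℓ))
    obtain ⟨ho1, ho2⟩ := hSout i l hl1
    obtain ⟨hi1, hi2⟩ := hSin i l
    obtain ⟨ha1, ha2⟩ := hSa i l hl1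
    have hcLA : (0:ℝ) ≤ (Fintype.card V : ℝ) * (L:ℝ) * Amax := by positivity
    have hLA : (0:ℝ) ≤ (L:ℝ) * Amax := by positivity
    have ht : ((∑ ℓ ∈ Finset.Icc l L, flowOut E ν i ℓ)
        - (∑ ℓ ∈ Finset.Icc (l + 1) L, flowIn E ν i ℓ)
        - (∑ ℓ ∈ Finset.Icc l L, a i ℓ)) ^ 2 ≤ M ^ 2 := by
      apply sq_le_sq' <;> rw [hM_def] <;>
        linarith [ho1, ho2, hi1, hi2, ha1, ha2, hTotCap, hTot0, hCap, hcLA, hLA]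
    linarith [h, ht]
  -- sum the per-queue quadratic bounds
  have hSmax : ∑ i ∈ Finset.univ.erase d, ∑ l ∈ Finset.Icc 1 L,
        (max (U i l + (∑ ℓ ∈ Finset.Icc l L, flowOut E ν i ℓ)
          - (∑ ℓ ∈ Finset.Icc (l + 1) L, flowIn E ν i ℓ)
          - (∑ ℓ ∈ Finset.Icc l L, a i ℓ)) 0) ^ 2
      ≤ (∑ i ∈ Finset.univ.erase d, ∑ l ∈ Finset.Icc 1 L, U i l ^ 2)
        + 2 * (∑ i ∈ Finset.univ.erase d, ∑ l ∈ Finset.Icc 1 L,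
            U i l * ((∑ ℓ ∈ Finset.Icc l L, flowOut E ν i ℓ)
              - (∑ ℓ ∈ Finset.Icc (l + 1) L, flowIn E ν i ℓ)
              - (∑ ℓ ∈ Finset.Icc l L, a i ℓ)))
        + (Fintype.card V : ℝ) * ((L : ℝ) * M ^ 2) := by
    calc ∑ i ∈ Finset.univ.erase d, ∑ l ∈ Finset.Icc 1 L,
          (max (U i l + (∑ ℓ ∈ Finset.Icc l L, flowOut E ν i ℓ)
            - (∑ ℓ ∈ Finset.Icc (l + 1) L, flowIn E ν i ℓ)
            - (∑ ℓ ∈ Finset.Icc l L, a i ℓ)) 0) ^ 2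
        ≤ ∑ i ∈ Finset.univ.erase d, ∑ l ∈ Finset.Icc 1 L,
            (U i l ^ 2 + 2 * (U i l * ((∑ ℓ ∈ Finset.Icc l L, flowOut E ν i ℓ)
              - (∑ ℓ ∈ Finset.Icc (l + 1) L, flowIn E ν i ℓ)
              - (∑ ℓ ∈ Finset.Icc l L, a i ℓ))) + M ^ 2) :=
          Finset.sum_le_sum fun i hi => Finset.sum_le_sum fun l hl => hq2 i hi l hl
      _ = (∑ i ∈ Finset.univ.erase d, ∑ l ∈ Finset.Icc 1 L, U i l ^ 2)
          + 2 * (∑ i ∈ Finset.univ.erase d, ∑ l ∈ Finset.Icc 1 L,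
              U i l * ((∑ ℓ ∈ Finset.Icc l L, flowOut E ν i ℓ)
                - (∑ ℓ ∈ Finset.Icc (l + 1) L, flowIn E ν i ℓ)
                - (∑ ℓ ∈ Finset.Icc l L, a i ℓ)))
          + ((Finset.univ.erase d).card : ℝ) * ((L : ℝ) * M ^ 2) := by
          simp only [Finset.sum_add_distrib, Finset.sum_const, Nat.card_Icc,
            Nat.add_sub_cancel, nsmul_eq_mul, Finset.mul_sum]
      _ ≤ _ := by
          have hcard : ((Finset.univ.erase d).card : ℝ) ≤ (Fintype.card V : ℝ) := by
            exact_mod_cast Finset.card_le_card (Finset.erase_subset d Finset.univ) |>.trans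
              (le_of_eq (Finset.card_univ))
          have h0 : 0 ≤ (L : ℝ) * M ^ 2 := by positivity
          have := mul_le_mul_of_nonneg_right hcard h0
          linarith
  -- the linear identity
  have hSO := out_id E d L U ν hU0
  have hSI := in_id E d L U ν hU0
  have hT1 := d_id E d L Ud ν
  rw [← hFd_def] at hT1
  have e1 : ∑ i ∈ Finset.univ.erase d, ∑ l ∈ Finset.Icc 1 L,
        U i l * ((∑ ℓ ∈ Finset.Icc l L, flowOut E ν i ℓ)
          - (∑ ℓ ∈ Finset.Icc (l + 1) L, flowIn E ν i ℓ)
          - (∑ ℓ ∈ Finset.Icc l L, a i ℓ))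
      = (∑ p ∈ E, ∑ ℓ ∈ Finset.Icc 1 L, (∑ k ∈ Finset.Icc 1 ℓ, U p.1 k) * ν p.1 p.2 ℓ)
        - (∑ p ∈ E, ∑ ℓ ∈ Finset.Icc 1 L, (∑ k ∈ Finset.Icc 1 (ℓ - 1), U p.2 k) * ν p.1 p.2 ℓ)
        - (∑ i ∈ Finset.univ.erase d, ∑ l ∈ Finset.Icc 1 L,
            (∑ ℓ ∈ Finset.Icc l L, a i ℓ) * U i l) := by
    have step : ∀ i ∈ Finset.univ.erase d, ∑ l ∈ Finset.Icc 1 L,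
        U i l * ((∑ ℓ ∈ Finset.Icc l L, flowOut E ν i ℓ)
          - (∑ ℓ ∈ Finset.Icc (l + 1) L, flowIn E ν i ℓ)
          - (∑ ℓ ∈ Finset.Icc l L, a i ℓ))
        = ∑ l ∈ Finset.Icc 1 L,
            (U i l * (∑ ℓ ∈ Finset.Icc l L, flowOut E ν i ℓ)
              - U i l * (∑ ℓ ∈ Finset.Icc (l + 1) L, flowIn E ν i ℓ)
              - (∑ ℓ ∈ Finset.Icc l L, a i ℓ) * U i l) := by
      intro i _
      exact Finset.sum_congr rfl fun l _ => by ring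
    rw [Finset.sum_congr rfl step]
    simp only [Finset.sum_sub_distrib]
    rw [hSO, hSI]
  have e2 : ∑ p ∈ E, ∑ l ∈ Finset.Icc 1 L,
        (- Vc * e p.1 p.2 - (∑ k ∈ Finset.Icc 1 l, U p.1 k)
          + (if p.2 = d then Ud else ∑ k ∈ Finset.Icc 1 (l - 1), U p.2 k)) * ν p.1 p.2 l
      = -(Vc * (∑ p ∈ E, e p.1 p.2 * (∑ l ∈ Finset.Icc 1 L, ν p.1 p.2 l)))
        - (∑ p ∈ E, ∑ ℓ ∈ Finset.Icc 1 L, (∑ k ∈ Finset.Icc 1 ℓ, U p.1 k) * ν p.1 p.2 ℓ)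
        + ((∑ p ∈ E, ∑ ℓ ∈ Finset.Icc 1 L, (∑ k ∈ Finset.Icc 1 (ℓ - 1), U p.2 k) * ν p.1 p.2 ℓ)
          + (∑ p ∈ E, ∑ l ∈ Finset.Icc 1 L, (if p.2 = d then Ud else 0) * ν p.1 p.2 l)) := by
    have step : ∀ p ∈ E, ∀ l ∈ Finset.Icc 1 L,
        (- Vc * e p.1 p.2 - (∑ k ∈ Finset.Icc 1 l, U p.1 k)
          + (if p.2 = d then Ud else ∑ k ∈ Finset.Icc 1 (l - 1), U p.2 k)) * ν p.1 p.2 l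
        = (∑ k ∈ Finset.Icc 1 (l - 1), U p.2 k) * ν p.1 p.2 l
          + (if p.2 = d then Ud else 0) * ν p.1 p.2 l
          - (∑ k ∈ Finset.Icc 1 l, U p.1 k) * ν p.1 p.2 l
          - Vc * (e p.1 p.2 * ν p.1 p.2 l) := by
      intro p _ l _
      have hq : (if p.2 = d then Ud else ∑ k ∈ Finset.Icc 1 (l - 1), U p.2 k)
          = (if p.2 = d then Ud else 0) + ∑ k ∈ Finset.Icc 1 (l - 1), U p.2 k := by
        split
        · rename_i h
          rw [h]
          simp [hU0]
        · simp
      rw [hq]; ring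
    rw [Finset.sum_congr rfl fun p hp => Finset.sum_congr rfl fun l hl => step p hp l hl]
    simp only [Finset.sum_add_distrib, Finset.sum_sub_distrib, ← Finset.mul_sum]
    ring
  -- final assembly
  have key : Ud * (γ * A - Fd)
      + (∑ i ∈ Finset.univ.erase d, ∑ l ∈ Finset.Icc 1 L,
          U i l * ((∑ ℓ ∈ Finset.Icc l L, flowOut E ν i ℓ)
            - (∑ ℓ ∈ Finset.Icc (l + 1) L, flowIn E ν i ℓ)
            - (∑ ℓ ∈ Finset.Icc l L, a i ℓ)))
      + Vc * (∑ p ∈ E, e p.1 p.2 * (∑ l ∈ Finset.Icc 1 L, ν p.1 p.2 l))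
      = γ * A * Ud
        - (∑ i ∈ Finset.univ.erase d, ∑ l ∈ Finset.Icc 1 L,
            (∑ ℓ ∈ Finset.Icc l L, a i ℓ) * U i l)
        - (∑ p ∈ E, ∑ l ∈ Finset.Icc 1 L,
            (- Vc * e p.1 p.2 - (∑ k ∈ Finset.Icc 1 l, U p.1 k)
              + (if p.2 = d then Ud else ∑ k ∈ Finset.Icc 1 (l - 1), U p.2 k))
            * ν p.1 p.2 l) := by
    linear_combination e1 + e2 - hT1
  clear_value A Fd Tot M Cap
  linarith [hq1, hSmax, key]
end
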